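/- arXiv:1802.06639 — 7 statements merged into one kernel-verified Lean document; each statement's English description precedes it below -/
import Mathlib

section
/- Let λ > 1/2, β ≥ 0, α > -β. For any f ∈ H^{α,β+λ}(T^d) one has Σ_{k∈Z^d} ω^{α,β}(k)|f̂_k| ≤ (1 + 2ζ(2λ))^{d/2} · (Σ_{k∈Z^d} ω^{α,β+λ}(k)²|f̂_k|²)^{1/2}, where ζ is the Riemann zeta function. In particular H^{α,β+λ}(T^d) embeds continuously into A^{α,β}(T^d). -/
open scoped BigOperators

set_option maxHeartbeats 1000000

/-- The weight `ω^{α,β}(k) = max(1,‖k‖₁)^α · ∏_s max(1,|k_s|)^β`. -/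
noncomputable def wt (d : ℕ) (α β : ℝ) (k : Fin d → ℤ) : ℝ :=
  (max 1 (∑ s, |(k s : ℝ)|)) ^ α * ∏ s, (max 1 |(k s : ℝ)|) ^ β

/-- Cauchy–Schwarz for `tsum`. -/
lemma cs_tsum {ι : Type*} {a b : ι → ℝ} (ha : ∀ i, 0 ≤ a i) (hb : ∀ i, 0 ≤ b i)
    (hA : Summable fun i => a i ^ 2) (hB : Summable fun i => b i ^ 2) :
    ∑' i, a i * b i ≤ Real.sqrt (∑' i, a i ^ 2) * Real.sqrt (∑' i, b i ^ 2) := by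
  have key : ∀ u : Finset ι, ∑ i ∈ u, a i * b i
      ≤ Real.sqrt (∑' i, a i ^ 2) * Real.sqrt (∑' i, b i ^ 2) := by
    intro u
    refine (Real.sum_mul_le_sqrt_mul_sqrt u a b).trans ?_
    have h1 : ∑ i ∈ u, a i ^ 2 ≤ ∑' i, a i ^ 2 :=
      Summable.sum_le_tsum u (fun i _ => sq_nonneg _) hA
    have h2 : ∑ i ∈ u, b i ^ 2 ≤ ∑' i, b i ^ 2 :=
      Summable.sum_le_tsum u (fun i _ => sq_nonneg _) hB
    exact mul_le_mul (Real.sqrt_le_sqrt h1) (Real.sqrt_le_sqrt h2)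
      (Real.sqrt_nonneg _) (Real.sqrt_nonneg _)
  have hs : Summable fun i => a i * b i :=
    summable_of_sum_le (fun i => mul_nonneg (ha i) (hb i)) key
  exact Summable.tsum_le_of_sum_le hs key

/-- Product structure of the sum over `Fin d → ℤ` of a product of one-dimensional terms. -/
lemma tsum_pi_prod (d : ℕ) (g : ℤ → ℝ) (hg0 : ∀ n, 0 ≤ g n) (hg : Summable g) :
    Summable (fun k : Fin d → ℤ => ∏ s, g (k s)) ∧
      ∑' k : Fin d → ℤ, ∏ s, g (k s) = (∑' n : ℤ, g n) ^ d := by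
  induction d with
  | zero =>
      constructor
      · exact .of_finite
      · rw [tsum_eq_single (default : Fin 0 → ℤ)
          (fun b hb => absurd (Subsingleton.elim b default) hb)]
        simp
  | succ d ih =>
      have hprod0 : ∀ k : Fin d → ℤ, 0 ≤ ∏ s, g (k s) := fun k =>
        Finset.prod_nonneg fun s _ => hg0 _
      have hF : Summable (fun p : ℤ × (Fin d → ℤ) => g p.1 * ∏ s, g (p.2 s)) :=
        Summable.mul_of_nonneg (f := g) (g := fun k : Fin d → ℤ => ∏ s, g (k s))
          hg ih.1 hg0 hprod0
      have he : ∀ k : Fin (d+1) → ℤ,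
          (fun p : ℤ × (Fin d → ℤ) => g p.1 * ∏ s, g (p.2 s)) ((Fin.consEquiv (fun _ : Fin (d+1) => ℤ)).symm k)
            = ∏ s, g (k s) := by
        intro k
        simp [Fin.consEquiv, Fin.prod_univ_succ, Fin.tail]
      constructor
      · have := (((Fin.consEquiv (fun _ : Fin (d+1) => ℤ)).symm).summable_iff
          (f := fun p : ℤ × (Fin d → ℤ) => g p.1 * ∏ s, g (p.2 s))).2 hF
        exact this.congr he
      · have h1 : ∑' k : Fin (d+1) → ℤ, ∏ s, g (k s)
            = ∑' p : ℤ × (Fin d → ℤ), g p.1 * ∏ s, g (p.2 s) := by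
          rw [← ((Fin.consEquiv (fun _ : Fin (d+1) => ℤ)).symm).tsum_eq
            (fun p : ℤ × (Fin d → ℤ) => g p.1 * ∏ s, g (p.2 s))]
          exact tsum_congr fun b => (he b).symm
        rw [h1, ← Summable.tsum_mul_tsum hg ih.1 hF, ih.2, pow_succ']

/-- The one-dimensional sum. -/
lemma oneD {lam : ℝ} (hlam : 1 / 2 < lam) :
    Summable (fun n : ℤ => (max 1 |(n : ℝ)|) ^ (-(2 * lam))) ∧
      ∑' n : ℤ, (max 1 |(n : ℝ)|) ^ (-(2 * lam))
        = 1 + 2 * (riemannZeta (2 * (lam : ℂ))).re := by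
  set p : ℝ := 2 * lam with hp_def
  have hp : 1 < p := by simpa [hp_def] using (by linarith : 1 < 2 * lam)
  -- the shifted nat sum
  have hS : Summable (fun n : ℕ => ((n : ℝ) + 1) ^ (-p)) := by
    have h0 : Summable (fun n : ℕ => ((n : ℝ)) ^ (-p)) :=
      Real.summable_nat_rpow.2 (by linarith)
    have := (summable_nat_add_iff 1).2 h0
    refine this.congr fun n => ?_
    push_cast
    ring_nf
  have hpos_term : ∀ n : ℕ,
      (max 1 |(((n : ℤ) + 1 : ℤ) : ℝ)|) ^ (-(2 * lam)) = ((n : ℝ) + 1) ^ (-p) := by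
    intro n
    have h1 : |(((n : ℤ) + 1 : ℤ) : ℝ)| = (n : ℝ) + 1 := by
      push_cast
      exact abs_of_nonneg (by positivity)
    rw [h1, max_eq_right (le_add_of_nonneg_left (Nat.cast_nonneg n))]
  have hneg_term : ∀ n : ℕ,
      (max 1 |((-((n : ℤ) + 1) : ℤ) : ℝ)|) ^ (-(2 * lam)) = ((n : ℝ) + 1) ^ (-p) := by
    intro n
    have h1 : |((-((n : ℤ) + 1) : ℤ) : ℝ)| = (n : ℝ) + 1 := by
      push_cast
      rw [abs_neg]
      exact abs_of_nonneg (by positivity)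
    rw [h1, max_eq_right (le_add_of_nonneg_left (Nat.cast_nonneg n))]
  have hsum_pos : Summable (fun n : ℕ =>
      (max 1 |(((n : ℤ) + 1 : ℤ) : ℝ)|) ^ (-(2 * lam))) := by
    refine hS.congr fun n => (hpos_term n).symm
  have hsum_neg : Summable (fun n : ℕ =>
      (max 1 |((-((n : ℤ) + 1) : ℤ) : ℝ)|) ^ (-(2 * lam))) := by
    refine hS.congr fun n => (hneg_term n).symm
  have hzero : (max 1 |((0 : ℤ) : ℝ)|) ^ (-(2 * lam)) = 1 := by
    simp
  -- zeta real part
  have hre : (riemannZeta (2 * (lam : ℂ))).re = ∑' n : ℕ, ((n : ℝ) + 1) ^ (-p) := by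
    have hs1 : 1 < (2 * (lam : ℂ)).re := by
      simpa using (by linarith : 1 < 2 * lam)
    rw [zeta_eq_tsum_one_div_nat_add_one_cpow hs1]
    have hterm : ∀ n : ℕ, 1 / ((n : ℂ) + 1) ^ (2 * (lam : ℂ))
        = ((((n : ℝ) + 1) ^ (-p) : ℝ) : ℂ) := by
      intro n
      have h0 : (0 : ℝ) ≤ (n : ℝ) + 1 := by positivity
      rw [Real.rpow_neg h0, Complex.ofReal_inv, Complex.ofReal_cpow h0, one_div]
      push_cast [hp_def]
      norm_num
    calc (∑' n : ℕ, 1 / ((n : ℂ) + 1) ^ (2 * (lam : ℂ))).re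
        = (∑' n : ℕ, ((((n : ℝ) + 1) ^ (-p) : ℝ) : ℂ)).re := by
          congr 1; exact tsum_congr hterm
      _ = ((((∑' n : ℕ, ((n : ℝ) + 1) ^ (-p)) : ℝ) : ℂ)).re := by
          rw [Complex.ofReal_tsum]
      _ = ∑' n : ℕ, ((n : ℝ) + 1) ^ (-p) := Complex.ofReal_re _
  constructor
  · exact Summable.of_add_one_of_neg_add_one hsum_pos hsum_neg
  · rw [tsum_of_add_one_of_neg_add_one hsum_pos hsum_neg]
    rw [tsum_congr hpos_term, tsum_congr hneg_term, hzero, hre]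
    ring

lemma wt_factor (d : ℕ) (α β lam : ℝ) (k : Fin d → ℤ) :
    wt d α β k = (∏ s, (max 1 |(k s : ℝ)|) ^ (-lam)) * wt d α (β + lam) k := by
  unfold wt
  have h : (∏ s, (max 1 |(k s : ℝ)|) ^ (-lam)) * ∏ s, (max 1 |(k s : ℝ)|) ^ (β + lam)
      = ∏ s, (max 1 |(k s : ℝ)|) ^ β := by
    rw [← Finset.prod_mul_distrib]
    refine Finset.prod_congr rfl fun s _ => ?_
    have hb : (0 : ℝ) < max 1 |(k s : ℝ)| := lt_of_lt_of_le one_pos (le_max_left _ _)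
    rw [← Real.rpow_add hb]
    ring_nf
  rw [← h]; ring

theorem stmt1 (d : ℕ) (α β lam : ℝ) (hlam : 1 / 2 < lam) (hβ : 0 ≤ β) (hα : α > -β)
    (fhat : (Fin d → ℤ) → ℂ)
    (hH : Summable fun k => (wt d α (β + lam) k) ^ 2 * ‖fhat k‖ ^ 2) :
    ∑' k : Fin d → ℤ, wt d α β k * ‖fhat k‖
      ≤ (1 + 2 * (riemannZeta (2 * (lam : ℂ))).re) ^ ((d : ℝ) / 2) *
        Real.sqrt (∑' k : Fin d → ℤ, (wt d α (β + lam) k) ^ 2 * ‖fhat k‖ ^ 2) := by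
  obtain ⟨hg_sum, hg_eq⟩ := oneD hlam
  set g : ℤ → ℝ := fun n => (max 1 |(n : ℝ)|) ^ (-(2 * lam)) with hg_def
  have hg0 : ∀ n, 0 ≤ g n := fun n => Real.rpow_nonneg
    (le_trans zero_le_one (le_max_left _ _)) _
  set c : ℝ := 1 + 2 * (riemannZeta (2 * (lam : ℂ))).re with hc_def
  have hc1 : 1 ≤ c := by
    rw [← hg_eq]
    have := Summable.le_tsum hg_sum 0 (fun n _ => hg0 n)
    simpa [hg_def] using this
  have hc0 : (0 : ℝ) ≤ c := le_trans zero_le_one hc1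
  obtain ⟨hprod_sum, hprod_eq⟩ := tsum_pi_prod d g hg0 hg_sum
  -- a and b
  set a : (Fin d → ℤ) → ℝ := fun k => ∏ s, (max 1 |(k s : ℝ)|) ^ (-lam) with ha_def
  set b : (Fin d → ℤ) → ℝ := fun k => wt d α (β + lam) k * ‖fhat k‖ with hb_def
  have hwt_nonneg : ∀ k, 0 ≤ wt d α (β + lam) k := by
    intro k
    unfold wt
    have h1 : (0:ℝ) ≤ (max 1 (∑ s, |(k s : ℝ)|)) ^ α :=
      Real.rpow_nonneg (le_trans zero_le_one (le_max_left _ _)) _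
    exact mul_nonneg h1 (Finset.prod_nonneg fun s _ =>
      Real.rpow_nonneg (le_trans zero_le_one (le_max_left _ _)) _)
  have ha0 : ∀ k, 0 ≤ a k := fun k => Finset.prod_nonneg fun s _ =>
    Real.rpow_nonneg (le_trans zero_le_one (le_max_left _ _)) _
  have hb0 : ∀ k, 0 ≤ b k := fun k => mul_nonneg (hwt_nonneg k) (norm_nonneg _)
  have ha_sq : ∀ k, a k ^ 2 = ∏ s, g (k s) := by
    intro k
    rw [ha_def]
    rw [← Finset.prod_pow]
    refine Finset.prod_congr rfl fun s _ => ?_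
    have hb : (0 : ℝ) < max 1 |(k s : ℝ)| := lt_of_lt_of_le one_pos (le_max_left _ _)
    rw [sq, ← Real.rpow_add hb, hg_def]
    ring_nf
  have hA : Summable fun k => a k ^ 2 := by
    refine hprod_sum.congr fun k => (ha_sq k).symm
  have hB : Summable fun k => b k ^ 2 := by
    refine hH.congr fun k => ?_
    rw [hb_def]; ring
  have hab : ∀ k, wt d α β k * ‖fhat k‖ = a k * b k := by
    intro k
    rw [hb_def, ha_def, wt_factor d α β lam k]
    ring
  have hcs := cs_tsum ha0 hb0 hA hB
  have htsA : ∑' k, a k ^ 2 = c ^ d := by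
    rw [tsum_congr ha_sq, hprod_eq, hg_eq]
  have htsB : (∑' k, b k ^ 2)
      = ∑' k : Fin d → ℤ, (wt d α (β + lam) k) ^ 2 * ‖fhat k‖ ^ 2 := by
    refine tsum_congr fun k => ?_
    rw [hb_def]; ring
  have hsqrt : Real.sqrt (c ^ d) = c ^ ((d : ℝ) / 2) := by
    rw [← Real.rpow_natCast c d, Real.sqrt_eq_rpow, ← Real.rpow_mul hc0]
    congr 1
    ring
  calc ∑' k : Fin d → ℤ, wt d α β k * ‖fhat k‖
      = ∑' k, a k * b k := tsum_congr hab
    _ ≤ Real.sqrt (∑' k, a k ^ 2) * Real.sqrt (∑' k, b k ^ 2) := hcs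
    _ = c ^ ((d : ℝ) / 2) *
        Real.sqrt (∑' k : Fin d → ℤ, (wt d α (β + lam) k) ^ 2 * ‖fhat k‖ ^ 2) := by
        rw [htsA, htsB, hsqrt]
end

section
/- More generally, for a single rank-1 lattice Λ(z_ℓ,M_ℓ) and the set I_ℓ := {k ∈ I : k·z_ℓ ≢ h·z_ℓ (mod M_ℓ) for all h ∈ I \ {k}} of uniquely reconstructable frequencies, the union over k ∈ I_ℓ of the shifted dual-lattice sets {k + h : h ∈ Λ(z_ℓ,M_ℓ)^⊥ \ {0}} is a disjoint union contained in Z^d \ I, and consequently Σ_{k∈I_ℓ} Σ_{h∈Λ(z_ℓ,M_ℓ)^⊥\{0}} |f̂_{k+h}| ≤ Σ_{k∈Z^d\I} |f̂_k| for any function f with absolutely summable Fourier coefficients. -/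
/-!
Since `h ↦ h·z mod M` is additive, shifting `k` by a dual-lattice vector `h` does not change its
residue. So a shift `k + h` with `h ≠ 0` landing in `I` would give a second frequency of `I` with
the residue of `k`, and two shifts `k + h = k' + h'` would give `k, k' ∈ I` with equal residues;
both are excluded when `k` is uniquely reconstructable. The map `(k, h) ↦ k + h` is therefore an
injection into `ℤ^d \ I`, and the estimate is a comparison of sums of nonnegative terms along it.
-/

section UniqueResidue

variable {G : Type*} [AddLeftCancelMonoid G] (φ : G →+ ℤ) {n : ℤ} {I : Set G} {k : G}

theorem map_add_modEq_of_dvd {h : G} (hφh : n ∣ φ h) : φ (k + h) ≡ φ k [ZMOD n] := by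
  rw [map_add]
  exact Int.add_modEq_left_iff.mpr hφh

theorem add_notMem_of_modEq_unique (hk : ∀ h ∈ I, h ≠ k → ¬ φ k ≡ φ h [ZMOD n]) {h : G}
    (hh : h ≠ 0) (hφh : n ∣ φ h) : k + h ∉ I := fun hmem =>
  hk (k + h) hmem (by simpa using hh) (map_add_modEq_of_dvd φ hφh).symm

theorem add_ne_add_of_modEq_unique (hk : ∀ h ∈ I, h ≠ k → ¬ φ k ≡ φ h [ZMOD n]) {k' : G}
    (hk' : k' ∈ I) (hne : k ≠ k') {h h' : G} (hφh : n ∣ φ h) (hφh' : n ∣ φ h') :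
    k + h ≠ k' + h' := fun heq =>
  hk k' hk' hne.symm <|
    (map_add_modEq_of_dvd φ hφh).symm.trans (heq ▸ map_add_modEq_of_dvd φ hφh')

end UniqueResidue

theorem sum_tsum_add_le_tsum {G : Type*} [Add G] [IsLeftCancelAdd G] {f : G → ℝ}
    (hf : ∀ x, 0 ≤ f x) {s : Finset G} {P Q : G → Prop} (hQ : ∀ k ∈ s, ∀ h, P h → Q (k + h))
    (hdisj : ∀ k ∈ s, ∀ k' ∈ s, k ≠ k' → ∀ h h', P h → P h' → k + h ≠ k' + h')
    (hsum : Summable fun t : {t // Q t} => f t) :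
    ∑ k ∈ s, ∑' h : {h // P h}, f (k + h) ≤ ∑' t : {t // Q t}, f t := by
  let e : (Σ _ : s, {h // P h}) → {t // Q t} := fun p => ⟨p.1 + p.2, hQ _ p.1.2 _ p.2.2⟩
  have he : Function.Injective e := by
    rintro ⟨⟨k, hk⟩, ⟨h, hh⟩⟩ ⟨⟨k', hk'⟩, ⟨h', hh'⟩⟩ heq
    have heq : k + h = k' + h' := congrArg Subtype.val heq
    obtain rfl : k = k' := by_contra fun hne => hdisj k hk k' hk' hne h h' hh hh' heq
    obtain rfl : h = h' := add_left_cancel heq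
    rfl
  have hsum_e : Summable fun p => f (e p) := hsum.comp_injective he
  calc ∑ k ∈ s, ∑' h : {h // P h}, f (k + h)
      = ∑' p, f (e p) := by rw [hsum_e.tsum_sigma, ← Finset.tsum_subtype]
    _ ≤ ∑' t : {t // Q t}, f t :=
      hsum_e.tsum_le_tsum_of_inj e he (fun t _ => hf t) (fun _ => le_rfl) hsum

theorem stmt8_general (d M : ℕ) (z : Fin d → ℤ) (I Il : Finset (Fin d → ℤ))
    (hIl : ∀ k, k ∈ Il ↔ k ∈ I ∧ ∀ h ∈ I, h ≠ k →
      ¬ ((∑ s, k s * z s) ≡ (∑ s, h s * z s) [ZMOD (M : ℤ)]))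
    (fhat : (Fin d → ℤ) → ℂ) (hsum : Summable fun k => ‖fhat k‖) :
    (∀ k ∈ Il, ∀ h : Fin d → ℤ, h ≠ 0 → (∑ s, h s * z s) % (M : ℤ) = 0 → k + h ∉ I) ∧
    (∀ k ∈ Il, ∀ k' ∈ Il, k ≠ k' → ∀ h h' : Fin d → ℤ, h ≠ 0 → h' ≠ 0 →
      (∑ s, h s * z s) % (M : ℤ) = 0 → (∑ s, h' s * z s) % (M : ℤ) = 0 →
      k + h ≠ k' + h') ∧
    (∑ k ∈ Il, ∑' h : {h : Fin d → ℤ // h ≠ 0 ∧ (∑ s, h s * z s) % (M : ℤ) = 0},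
        ‖fhat (k + h.1)‖)
      ≤ ∑' k : {k : Fin d → ℤ // k ∉ I}, ‖fhat k.1‖ := by
  let φ : (Fin d → ℤ) →+ ℤ := ((dotProductBilin ℤ ℤ).flip z).toAddMonoidHom
  have hunique : ∀ k ∈ Il, ∀ h ∈ (I : Set (Fin d → ℤ)), h ≠ k → ¬ φ k ≡ φ h [ZMOD M] :=
    fun k hk => ((hIl k).1 hk).2
  have hnotMem : ∀ k ∈ Il, ∀ h : Fin d → ℤ, h ≠ 0 → (∑ s, h s * z s) % (M : ℤ) = 0 →
      k + h ∉ I := fun k hk h hh hφh =>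
    add_notMem_of_modEq_unique φ (hunique k hk) hh (Int.dvd_of_emod_eq_zero hφh)
  have hdisj : ∀ k ∈ Il, ∀ k' ∈ Il, k ≠ k' → ∀ h h' : Fin d → ℤ,
      (∑ s, h s * z s) % (M : ℤ) = 0 → (∑ s, h' s * z s) % (M : ℤ) = 0 → k + h ≠ k' + h' :=
    fun k hk k' hk' hne h h' hφh hφh' =>
      add_ne_add_of_modEq_unique φ (hunique k hk) ((hIl k').1 hk').1 hne
        (Int.dvd_of_emod_eq_zero hφh) (Int.dvd_of_emod_eq_zero hφh')
  refine ⟨hnotMem, fun k hk k' hk' hne h h' _ _ => hdisj k hk k' hk' hne h h', ?_⟩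
  exact sum_tsum_add_le_tsum (fun _ => norm_nonneg _) (fun k hk h hh => hnotMem k hk h hh.1 hh.2)
    (fun k hk k' hk' hne h h' hh hh' => hdisj k hk k' hk' hne h h' hh.2 hh'.2) (hsum.subtype _)

theorem stmt8 (d M : ℕ) (hM : 0 < M) (z : Fin d → ℤ) (I Il : Finset (Fin d → ℤ))
    (hIl : ∀ k, k ∈ Il ↔ k ∈ I ∧ ∀ h ∈ I, h ≠ k →
      ¬ ((∑ s, k s * z s) ≡ (∑ s, h s * z s) [ZMOD (M : ℤ)]))
    (fhat : (Fin d → ℤ) → ℂ) (hsum : Summable fun k => ‖fhat k‖) :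
    (∀ k ∈ Il, ∀ h : Fin d → ℤ, h ≠ 0 → (∑ s, h s * z s) % (M : ℤ) = 0 → k + h ∉ I) ∧
    (∀ k ∈ Il, ∀ k' ∈ Il, k ≠ k' → ∀ h h' : Fin d → ℤ, h ≠ 0 → h' ≠ 0 →
      (∑ s, h s * z s) % (M : ℤ) = 0 → (∑ s, h' s * z s) % (M : ℤ) = 0 →
      k + h ≠ k' + h') ∧
    (∑ k ∈ Il, ∑' h : {h : Fin d → ℤ // h ≠ 0 ∧ (∑ s, h s * z s) % (M : ℤ) = 0},
        ‖fhat (k + h.1)‖)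
      ≤ ∑' k : {k : Fin d → ℤ // k ∉ I}, ‖fhat k.1‖ :=
  stmt8_general d M z I Il hIl fhat hsum
end

section
/- Under the conditions of the previous statement (f ∈ A(T^d) ∩ C(T^d), Λ a multiple rank-1 lattice of L single lattices fulfilling the reconstruction property for I), the aliasing error is bounded by ‖S_I f − S^Λ_I f‖_{L∞(T^d)} ≤ L · Σ_{k∈Z^d\I} |f̂_k|. -/
open scoped BigOperators

private lemma sum_tsum_le {α β : Type*} (g : α → ℝ) (hg : Summable g)
    (h0 : ∀ a, 0 ≤ g a) (F : Finset β) :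
    ∀ (C : Set α) (S : β → Set α), (∀ b ∈ F, S b ⊆ C) →
    (∀ b ∈ F, ∀ b' ∈ F, b ≠ b' → Disjoint (S b) (S b')) →
    ∑ b ∈ F, (∑' a : S b, g a.1) ≤ ∑' a : C, g a.1 := by
  classical
  induction F using Finset.induction_on with
  | empty =>
    intro C S _ _
    simpa using tsum_nonneg (fun a : C => h0 a.1)
  | @insert b F hbF ih =>
    intro C S hsub hdisj
    rw [Finset.sum_insert hbF]
    have hSbC : S b ⊆ C := hsub b (Finset.mem_insert_self b F)
    have h1 : ∑ b' ∈ F, (∑' a : S b', g a.1) ≤ ∑' a : (C \ S b : Set α), g a.1 := by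
      refine ih (C \ S b) S (fun b' hb' => ?_)
        (fun b1 h1 b2 h2 hne =>
          hdisj b1 (Finset.mem_insert_of_mem h1) b2 (Finset.mem_insert_of_mem h2) hne)
      refine Set.subset_diff.2 ⟨hsub b' (Finset.mem_insert_of_mem hb'), ?_⟩
      exact hdisj b' (Finset.mem_insert_of_mem hb') b (Finset.mem_insert_self b F)
        (fun h => hbF (h ▸ hb'))
    have key := Summable.tsum_union_disjoint (f := g) (Set.disjoint_sdiff_right (s := S b) (t := C))
      (hg.subtype _) (hg.subtype _)
    rw [Set.union_diff_cancel hSbC] at key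
    rw [key]
    linarith

/-- `k ∈ I` is uniquely reconstructable w.r.t. the rank-1 lattice `Λ(z,M)` within `I`. -/
def uniqRec (d : ℕ) (I : Finset (Fin d → ℤ)) (z : Fin d → ℤ) (M : ℕ) (k : Fin d → ℤ) : Prop :=
  ∀ h ∈ I, h ≠ k → ¬ ((∑ s, k s * z s) ≡ (∑ s, h s * z s) [ZMOD (M : ℤ)])

open scoped Classical in
/-- `L_k`: the set of lattice indices `ℓ` for which `k` is uniquely reconstructable. -/
noncomputable def Lset (d L : ℕ) (I : Finset (Fin d → ℤ)) (z : Fin L → Fin d → ℤ)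
    (M : Fin L → ℕ) (k : Fin d → ℤ) : Finset (Fin L) :=
  Finset.univ.filter fun ℓ => uniqRec d I (z ℓ) (M ℓ) k

/-- The averaged approximated Fourier coefficient `f̂^Λ_k`. -/
noncomputable def coefML (d L : ℕ) (I : Finset (Fin d → ℤ)) (z : Fin L → Fin d → ℤ)
    (M : Fin L → ℕ) (fhat : (Fin d → ℤ) → ℂ) (k : Fin d → ℤ) : ℂ :=
  ((Lset d L I z M k).card : ℂ)⁻¹ *
    ∑ ℓ ∈ Lset d L I z M k,
      ∑' h : {h : Fin d → ℤ // (∑ s, h s * (z ℓ) s) % ((M ℓ : ℤ)) = 0}, fhat (k + h.1)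

theorem stmt10 (d L : ℕ) (I : Finset (Fin d → ℤ)) (z : Fin L → Fin d → ℤ) (M : Fin L → ℕ)
    (hM : ∀ ℓ, 0 < M ℓ)
    (fhat : (Fin d → ℤ) → ℂ) (hsum : Summable fun k => ‖fhat k‖)
    (hrec : ∀ k ∈ I, ∃ ℓ, uniqRec d I (z ℓ) (M ℓ) k) (x : Fin d → ℝ) :
    ‖((∑ k ∈ I, fhat k *
            Complex.exp (2 * (Real.pi : ℂ) * Complex.I * ∑ s, (k s : ℂ) * (x s : ℂ))) -
          (∑ k ∈ I, coefML d L I z M fhat k *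
            Complex.exp (2 * (Real.pi : ℂ) * Complex.I * ∑ s, (k s : ℂ) * (x s : ℂ))))‖
      ≤ (L : ℝ) * ∑' k : {k : Fin d → ℤ // k ∉ I}, ‖fhat k.1‖ := by
  classical
  set g : (Fin d → ℤ) → ℝ := fun m => ‖fhat m‖ with hgdef
  have h0 : ∀ m, 0 ≤ g m := fun m => norm_nonneg _
  have hf : Summable fhat := by
    apply Summable.of_norm
    simpa using hsum
  have htrans : ∀ k : Fin d → ℤ, Summable (fun m => fhat (k + m)) := fun k =>
    hf.comp_injective (add_right_injective k)
  have htransn : ∀ k : Fin d → ℤ, Summable (fun m => g (k + m)) := fun k =>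
    hsum.comp_injective (add_right_injective k)
  -- the "bad" index sets
  set B : Fin L → (Fin d → ℤ) → Set (Fin d → ℤ) :=
    fun ℓ k => {h | (∑ s, h s * (z ℓ) s) % ((M ℓ : ℤ)) = 0 ∧ h ≠ 0} with hBdef
  set T : ℝ := ∑' k : {k : Fin d → ℤ // k ∉ I}, ‖fhat k.1‖ with hTdef
  -- step A : pointwise bound on |fhat k - coefML k|
  have hA : ∀ k ∈ I, ‖fhat k - coefML d L I z M fhat k‖ ≤
      ∑ ℓ ∈ Lset d L I z M k, ∑' h : B ℓ k, g (k + h.1) := by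
    intro k hk
    obtain ⟨ℓ0, hℓ0⟩ := hrec k hk
    have hcard : 0 < (Lset d L I z M k).card :=
      Finset.card_pos.2 ⟨ℓ0, by simp [Lset, hℓ0]⟩
    have hcne : ((Lset d L I z M k).card : ℂ) ≠ 0 := Nat.cast_ne_zero.2 hcard.ne'
    have hsplit : ∀ ℓ : Fin L,
        (∑' h : {h : Fin d → ℤ // (∑ s, h s * (z ℓ) s) % ((M ℓ : ℤ)) = 0}, fhat (k + h.1))
          = fhat k + ∑' h : B ℓ k, fhat (k + h.1) := by
      intro ℓ
      have hset : {h : Fin d → ℤ | (∑ s, h s * (z ℓ) s) % ((M ℓ : ℤ)) = 0}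
          = ({0} : Set (Fin d → ℤ)) ∪ B ℓ k := by
        ext h
        simp only [Set.mem_setOf_eq, Set.mem_union, Set.mem_singleton_iff, hBdef]
        constructor
        · intro hh
          by_cases h0' : h = 0
          · exact Or.inl h0'
          · exact Or.inr ⟨hh, h0'⟩
        · rintro (rfl | ⟨hh, _⟩)
          · simp
          · exact hh
      have hdisj0 : Disjoint ({0} : Set (Fin d → ℤ)) (B ℓ k) :=
        Set.disjoint_singleton_left.2 (fun h => h.2 rfl)
      calc (∑' h : {h : Fin d → ℤ // (∑ s, h s * (z ℓ) s) % ((M ℓ : ℤ)) = 0}, fhat (k + h.1))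
          = ∑' h : (({0} : Set (Fin d → ℤ)) ∪ B ℓ k : Set (Fin d → ℤ)), fhat (k + h.1) := by
            rw [← hset]; rfl
        _ = (∑' h : ({0} : Set (Fin d → ℤ)), fhat (k + h.1)) + ∑' h : B ℓ k, fhat (k + h.1) :=
            Summable.tsum_union_disjoint (f := fun m => fhat (k + m)) hdisj0
              ((htrans k).subtype _) ((htrans k).subtype _)
        _ = fhat k + ∑' h : B ℓ k, fhat (k + h.1) := by
            rw [tsum_singleton (0 : Fin d → ℤ) (fun m => fhat (k + m)), add_zero]
    have hcoef : coefML d L I z M fhat k = fhat k +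
        ((Lset d L I z M k).card : ℂ)⁻¹ *
          ∑ ℓ ∈ Lset d L I z M k, ∑' h : B ℓ k, fhat (k + h.1) := by
      rw [coefML, Finset.sum_congr rfl (fun ℓ _ => hsplit ℓ), Finset.sum_add_distrib,
        Finset.sum_const, nsmul_eq_mul, mul_add, ← mul_assoc, inv_mul_cancel₀ hcne, one_mul]
    rw [hcoef]
    have habs : ‖fhat k - (fhat k +
        ((Lset d L I z M k).card : ℂ)⁻¹ *
          ∑ ℓ ∈ Lset d L I z M k, ∑' h : B ℓ k, fhat (k + h.1))‖
        = ((Lset d L I z M k).card : ℝ)⁻¹ *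
          ‖∑ ℓ ∈ Lset d L I z M k, ∑' h : B ℓ k, fhat (k + h.1)‖ := by
      rw [sub_add_cancel_left, norm_neg, norm_mul, norm_inv, Complex.norm_natCast]
    rw [habs]
    have h1 : ‖∑ ℓ ∈ Lset d L I z M k, ∑' h : B ℓ k, fhat (k + h.1)‖
        ≤ ∑ ℓ ∈ Lset d L I z M k, ∑' h : B ℓ k, g (k + h.1) := by
      refine (norm_sum_le _ _).trans (Finset.sum_le_sum fun ℓ _ => ?_)
      simpa using
        norm_tsum_le_tsum_norm (f := fun h : B ℓ k => fhat (k + h.1))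
          (((htransn k).subtype _))
    have hX0 : 0 ≤ ∑ ℓ ∈ Lset d L I z M k, ∑' h : B ℓ k, g (k + h.1) :=
      Finset.sum_nonneg fun ℓ _ => tsum_nonneg fun h => h0 _
    calc ((Lset d L I z M k).card : ℝ)⁻¹ *
          ‖∑ ℓ ∈ Lset d L I z M k, ∑' h : B ℓ k, fhat (k + h.1)‖
        ≤ 1 * (∑ ℓ ∈ Lset d L I z M k, ∑' h : B ℓ k, g (k + h.1)) := by
          apply mul_le_mul _ h1 (norm_nonneg _) zero_le_one
          exact inv_le_one_of_one_le₀ (by exact_mod_cast hcard)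
      _ = _ := one_mul _
  -- step B: per-lattice bound via disjoint supports
  have hperl : ∀ ℓ : Fin L,
      ∑ k ∈ I.filter (fun k => uniqRec d I (z ℓ) (M ℓ) k), (∑' h : B ℓ k, g (k + h.1)) ≤ T := by
    intro ℓ
    have himg : ∀ k : Fin d → ℤ, (∑' h : B ℓ k, g (k + h.1))
        = ∑' m : ((k + ·) '' (B ℓ k) : Set (Fin d → ℤ)), g m.1 :=
      fun k => (tsum_image g ((add_right_injective k).injOn)).symm
    rw [Finset.sum_congr rfl (fun k _ => himg k)]
    have hsumadd : ∀ k h : Fin d → ℤ,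
        (∑ s, (k + h) s * (z ℓ) s) = (∑ s, k s * (z ℓ) s) + ∑ s, h s * (z ℓ) s := by
      intro k h
      rw [← Finset.sum_add_distrib]
      exact Finset.sum_congr rfl fun s _ => by simp [add_mul]
    refine sum_tsum_le g hsum h0 _ {m : Fin d → ℤ | m ∉ I} _ ?_ ?_
    · rintro k hk m ⟨h, hh, rfl⟩
      obtain ⟨hkI, hkU⟩ := Finset.mem_filter.mp hk
      obtain ⟨hmod, hne⟩ := hh
      intro hmI
      have hdvd : ((M ℓ : ℤ)) ∣ ∑ s, h s * (z ℓ) s := Int.dvd_of_emod_eq_zero hmod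
      have hmod2 : (∑ s, k s * (z ℓ) s) ≡ (∑ s, (k + h) s * (z ℓ) s) [ZMOD ((M ℓ : ℕ) : ℤ)] :=
        Int.ModEq.symm (Int.modEq_iff_dvd.mpr (by rw [hsumadd]; simpa using hdvd))
      exact hkU (k + h) hmI (fun he => hne (by simpa using add_eq_left.mp he)) hmod2
    · intro k1 hk1 k2 hk2 hne12
      obtain ⟨hk1I, hk1U⟩ := Finset.mem_filter.mp hk1
      obtain ⟨hk2I, _⟩ := Finset.mem_filter.mp hk2
      rw [Set.disjoint_left]
      rintro m ⟨h1, hh1, rfl⟩ ⟨h2, hh2, heq⟩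
      have hdvd1 : ((M ℓ : ℤ)) ∣ ∑ s, h1 s * (z ℓ) s := Int.dvd_of_emod_eq_zero hh1.1
      have hdvd2 : ((M ℓ : ℤ)) ∣ ∑ s, h2 s * (z ℓ) s := Int.dvd_of_emod_eq_zero hh2.1
      have heqs : (∑ s, k2 s * (z ℓ) s) + ∑ s, h2 s * (z ℓ) s
          = (∑ s, k1 s * (z ℓ) s) + ∑ s, h1 s * (z ℓ) s := by
        rw [← hsumadd, ← hsumadd, show k2 + h2 = k1 + h1 from heq]
      have hmod12 : (∑ s, k1 s * (z ℓ) s) ≡ (∑ s, k2 s * (z ℓ) s) [ZMOD ((M ℓ : ℕ) : ℤ)] := by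
        refine Int.modEq_iff_dvd.mpr ?_
        have : (∑ s, k2 s * (z ℓ) s) - (∑ s, k1 s * (z ℓ) s)
            = (∑ s, h1 s * (z ℓ) s) - ∑ s, h2 s * (z ℓ) s := by linarith [heqs]
        rw [this]
        exact dvd_sub hdvd1 hdvd2
      exact hk1U k2 hk2I (fun he => hne12 he.symm) hmod12
  -- swap the two finite sums
  have hswap : ∑ k ∈ I, (∑ ℓ ∈ Lset d L I z M k, ∑' h : B ℓ k, g (k + h.1))
      = ∑ ℓ : Fin L, ∑ k ∈ I.filter (fun k => uniqRec d I (z ℓ) (M ℓ) k),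
          (∑' h : B ℓ k, g (k + h.1)) := by
    simp only [Lset, Finset.sum_filter]
    exact Finset.sum_comm
  -- the exponentials have modulus one
  have heabs : ∀ k : Fin d → ℤ,
      ‖Complex.exp (2 * (Real.pi : ℂ) * Complex.I * ∑ s, (k s : ℂ) * (x s : ℂ))‖ = 1 := by
    intro k
    have hw : (∑ s, (k s : ℂ) * (x s : ℂ)) = ((∑ s, (k s : ℝ) * x s : ℝ) : ℂ) := by
      push_cast; ring
    rw [hw, show (2 * (Real.pi : ℂ) * Complex.I * ((∑ s, (k s : ℝ) * x s : ℝ) : ℂ))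
        = ((2 * Real.pi * (∑ s, (k s : ℝ) * x s) : ℝ) : ℂ) * Complex.I by push_cast; ring]
    exact Complex.norm_exp_ofReal_mul_I _
  rw [← Finset.sum_sub_distrib]
  simp only [← sub_mul]
  refine le_trans (norm_sum_le _ _) ?_
  have hmain : ∑ k ∈ I, ‖(fhat k - coefML d L I z M fhat k) *
        Complex.exp (2 * (Real.pi : ℂ) * Complex.I * ∑ s, (k s : ℂ) * (x s : ℂ))‖
      ≤ (L : ℝ) * T := by
    calc ∑ k ∈ I, ‖(fhat k - coefML d L I z M fhat k) *
          Complex.exp (2 * (Real.pi : ℂ) * Complex.I * ∑ s, (k s : ℂ) * (x s : ℂ))‖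
        = ∑ k ∈ I, ‖fhat k - coefML d L I z M fhat k‖ :=
          Finset.sum_congr rfl fun k _ => by rw [norm_mul, heabs, mul_one]
      _ ≤ ∑ k ∈ I, (∑ ℓ ∈ Lset d L I z M k, ∑' h : B ℓ k, g (k + h.1)) :=
          Finset.sum_le_sum hA
      _ = ∑ ℓ : Fin L, ∑ k ∈ I.filter (fun k => uniqRec d I (z ℓ) (M ℓ) k),
            (∑' h : B ℓ k, g (k + h.1)) := hswap
      _ ≤ ∑ _ℓ : Fin L, T := Finset.sum_le_sum fun ℓ _ => hperl ℓ
      _ = (L : ℝ) * T := by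
          rw [Finset.sum_const, Finset.card_univ, Fintype.card_fin, nsmul_eq_mul]
  exact hmain
end

section
/- Theorem (L∞ sampling error for multiple rank-1 lattices): Let f ∈ A^{α,β}(T^d) ∩ C(T^d) with β ≥ 0, α > -β, let T := -α/β (T := -∞ if β = 0), and let Λ be a multiple rank-1 lattice of L single rank-1 lattices fulfilling the reconstruction property for I = I_N^{d,T}, with approximated coefficients computed by the averaging algorithm. Then ‖f − S^Λ_{I_N^{d,T}} f‖_{L∞(T^d)} ≤ ‖f − S^Λ_{I_N^{d,T}} f‖_{A(T^d)} ≤ N^{-(α+β)}·(1+L)·‖f‖_{A^{α,β}(T^d)}. -/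
open scoped BigOperators

open scoped Classical in
/-- Membership in `I_N^{d,T}` with `T = -α/β` (for `β = 0`: `T = -∞`, the `ℓ¹`-ball). -/
noncomputable def idxMem (d : ℕ) (α β N : ℝ) (k : Fin d → ℤ) : Prop :=
  if β = 0 then max 1 (∑ s, |(k s : ℝ)|) ≤ N
  else (max 1 (∑ s, |(k s : ℝ)|)) ^ (α / β) * ∏ s, max 1 |(k s : ℝ)| ≤ N ^ (1 + α / β)

/-!
Fix a lattice `Λ(z, M)` that reconstructs `k ∈ I` uniquely. Its aliased coefficient differs from
`f̂_k` by the sum of `f̂` over the aliasing class of `k` with `k` removed, and unique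
reconstruction puts that set outside `I`. Different such `k` have different residues `k · z mod M`,
hence disjoint aliasing classes, so for each of the `L` lattices the total coefficient error is at
most the tail `∑_{k ∉ I} |f̂_k|`, and averaging over the lattices reconstructing `k` does not
increase it. Outside `I_N^{d,T}` the weight is at least `N^{α+β}`, which bounds the tail by
`N^{-(α+β)} ‖f‖_{A^{α,β}}`.
-/

section Weight

variable {d : ℕ}

lemma wt_nonneg (α β : ℝ) (k : Fin d → ℤ) : 0 ≤ wt d α β k :=
  mul_nonneg (Real.rpow_nonneg (zero_le_one.trans (le_max_left _ _)) _)
    (Finset.prod_nonneg fun _ _ => Real.rpow_nonneg (zero_le_one.trans (le_max_left _ _)) _)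

lemma rpow_le_wt_of_not_idxMem {α β N : ℝ} (hβ : 0 ≤ β) (hα : -β < α) (hN : 0 < N)
    {k : Fin d → ℤ} (hk : ¬ idxMem d α β N k) : N ^ (α + β) ≤ wt d α β k := by
  set m : ℝ := max 1 (∑ s, |(k s : ℝ)|)
  have hm : 0 ≤ m := zero_le_one.trans (le_max_left _ _)
  unfold idxMem at hk
  unfold wt
  rcases hβ.eq_or_lt with rfl | hβ
  · rw [if_pos rfl, not_le] at hk
    simpa using Real.rpow_le_rpow hN.le hk.le (by linarith : (0 : ℝ) ≤ α)
  · rw [if_neg hβ.ne', not_le] at hk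
    have hP : 0 ≤ ∏ s, max 1 |(k s : ℝ)| :=
      Finset.prod_nonneg fun _ _ => zero_le_one.trans (le_max_left _ _)
    calc N ^ (α + β) = (N ^ (1 + α / β)) ^ β := by
          rw [← Real.rpow_mul hN.le]; congr 1; field_simp; ring
      _ ≤ (m ^ (α / β) * ∏ s, max 1 |(k s : ℝ)|) ^ β :=
          Real.rpow_le_rpow (Real.rpow_nonneg hN.le _) hk.le hβ.le
      _ = m ^ α * ∏ s, (max 1 |(k s : ℝ)|) ^ β := by
          rw [Real.mul_rpow (Real.rpow_nonneg hm _) hP, ← Real.rpow_mul hm,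
            div_mul_cancel₀ _ hβ.ne', ← Real.finsetProd_rpow _ _
              fun _ _ => zero_le_one.trans (le_max_left _ _)]

end Weight

section Summation

variable {ι : Type*}

lemma Summable.subtype_of_subset {a : ι → ℝ} {s t : Set ι} (hst : s ⊆ t)
    (ht : Summable fun k : t => a k) : Summable fun k : s => a k :=
  ht.comp_injective (Set.inclusion_injective hst)

lemma tsum_subtype_le_of_subset {a : ι → ℝ} (ha : 0 ≤ a) {s t : Set ι} (hst : s ⊆ t)
    (ht : Summable fun k : t => a k) : ∑' k : s, a k ≤ ∑' k : t, a k := by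
  rw [tsum_subtype, tsum_subtype]
  exact Summable.tsum_le_tsum (Set.indicator_le_indicator_of_subset hst ha)
    (summable_subtype_iff_indicator.mp (ht.subtype_of_subset hst))
    (summable_subtype_iff_indicator.mp ht)

lemma sum_tsum_le_tsum_of_pairwiseDisjoint {a : ι → ℝ} (ha : 0 ≤ a) {S : Set ι}
    (hS : Summable fun k : S => a k) {κ : Type*} (F : Finset κ) {t : κ → Set ι}
    (htS : ∀ i ∈ F, t i ⊆ S) (hdisj : (F : Set κ).PairwiseDisjoint t) :
    ∑ i ∈ F, ∑' k : t i, a k ≤ ∑' k : S, a k := by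
  have hsum : ∀ i ∈ F, HasSum (fun k : t i => a k) (∑' k : t i, a k) := fun i hi =>
    (hS.subtype_of_subset (htS i hi)).hasSum
  rw [← (hasSum_sum_disjoint F hdisj hsum).tsum_eq]
  exact tsum_subtype_le_of_subset ha (Set.iUnion₂_subset htS) hS

lemma tsum_compl_le_inv_mul_tsum {a w : ι → ℝ} (ha : 0 ≤ a) (hw0 : 0 ≤ w)
    (hwa : Summable fun k => w k * a k) {s : Set ι} {c : ℝ} (hc : 0 < c)
    (hw : ∀ k ∉ s, c ≤ w k) :
    ∑' k : {k // k ∉ s}, a k ≤ c⁻¹ * ∑' k, w k * a k := by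
  have hle : ∀ k : {k // k ∉ s}, a k ≤ c⁻¹ * (w k * a k) := fun k => by
    rw [← mul_assoc, ← div_eq_inv_mul]
    exact le_mul_of_one_le_left (ha k) ((one_le_div hc).mpr (hw k k.2))
  have hwa' : Summable fun k : {k // k ∉ s} => c⁻¹ * (w k * a k) := (hwa.subtype _).mul_left _
  calc ∑' k : {k // k ∉ s}, a k ≤ ∑' k : {k // k ∉ s}, c⁻¹ * (w k * a k) :=
        (Summable.of_nonneg_of_le (fun k : {k // k ∉ s} => ha k) hle hwa').tsum_le_tsum hle hwa'
    _ = c⁻¹ * ∑' k : {k // k ∉ s}, w k * a k := tsum_mul_left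
    _ ≤ c⁻¹ * ∑' k, w k * a k := by
        gcongr
        exact hwa.tsum_subtype_le _ _ fun k => mul_nonneg (hw0 k) (ha k)

end Summation

section Norms

variable {ι E : Type*} [NormedAddCommGroup E] [CompleteSpace E]

lemma norm_sub_tsum_subtype_le {f : ι → E} (hf : Summable fun k => ‖f k‖) {T : Set ι} {k : ι}
    (hk : k ∈ T) : ‖f k - ∑' k' : T, f k'‖ ≤ ∑' k' : ↥(T \ {k}), ‖f k'‖ := by
  have hsplit : ∑' k' : T, f k' = f k + ∑' k' : ↥(T \ {k}), f k' := by
    rw [← tsum_singleton k f, ← Summable.tsum_union_disjoint disjoint_sdiff_self_right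
      (hf.of_norm.subtype _) (hf.of_norm.subtype _), Set.union_sdiff_cancel
      (Set.singleton_subset_iff.mpr hk)]
  rw [hsplit, sub_add_cancel_left, norm_neg]
  exact norm_tsum_le_tsum_norm (hf.subtype _)

lemma norm_sub_inv_card_mul_sum_le {𝕜 : Type*} [RCLike 𝕜] {s : Finset ι} (hs : s.Nonempty)
    (x : 𝕜) (y : ι → 𝕜) : ‖x - (s.card : 𝕜)⁻¹ * ∑ i ∈ s, y i‖ ≤ ∑ i ∈ s, ‖x - y i‖ := by
  have hcard : (s.card : 𝕜) ≠ 0 := Nat.cast_ne_zero.mpr hs.card_pos.ne'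
  have hx : x - (s.card : 𝕜)⁻¹ * ∑ i ∈ s, y i = (s.card : 𝕜)⁻¹ * ∑ i ∈ s, (x - y i) := by
    rw [Finset.sum_sub_distrib, Finset.sum_const, nsmul_eq_mul, mul_sub, inv_mul_cancel_left₀ hcard]
  rw [hx, norm_mul, norm_inv, RCLike.norm_natCast]
  calc (s.card : ℝ)⁻¹ * ‖∑ i ∈ s, (x - y i)‖ ≤ 1 * ∑ i ∈ s, ‖x - y i‖ :=
        mul_le_mul (inv_le_one_of_one_le₀ (by exact_mod_cast hs.card_pos)) (norm_sum_le _ _)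
          (norm_nonneg _) zero_le_one
    _ = ∑ i ∈ s, ‖x - y i‖ := one_mul _

lemma norm_tsum_mul_sub_sum_mul_le {𝕜 : Type*} [NormedField 𝕜] [CompleteSpace 𝕜] {c e : ι → 𝕜}
    (hc : Summable fun k => ‖c k‖) (he : ∀ k, ‖e k‖ ≤ 1) (I : Finset ι) (a : ι → 𝕜) :
    ‖(∑' k, c k * e k) - ∑ k ∈ I, a k * e k‖
      ≤ (∑' k : {k // k ∉ I}, ‖c k‖) + ∑ k ∈ I, ‖c k - a k‖ := by
  have hmul : ∀ x k, ‖x * e k‖ ≤ ‖x‖ := fun x k => by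
    rw [norm_mul]; exact mul_le_of_le_one_right (norm_nonneg _) (he k)
  have hsum : Summable fun k => ‖c k * e k‖ :=
    hc.of_nonneg_of_le (fun _ => norm_nonneg _) fun k => hmul _ k
  rw [← hsum.of_norm.sum_add_tsum_compl (s := I), add_sub_right_comm, ← Finset.sum_sub_distrib,
    add_comm]
  refine (norm_add_le _ _).trans (add_le_add ?_ ?_)
  · exact (norm_tsum_le_tsum_norm (hsum.subtype _)).trans
      ((hsum.subtype _).tsum_le_tsum (fun k => hmul _ k) (hc.subtype _))
  · exact (norm_sum_le _ _).trans (Finset.sum_le_sum fun k _ => by rw [← sub_mul]; exact hmul _ k)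

end Norms

section RankOneLattice

variable {d : ℕ}

/-- Frequencies alias on `Λ(z, M)` exactly when they have the same residue. -/
def latticeResidue (z : Fin d → ℤ) (M : ℕ) : (Fin d → ℤ) →+ ZMod M where
  toFun k := ((∑ s, k s * z s : ℤ) : ZMod M)
  map_zero' := by simp
  map_add' k k' := by simp [add_mul, Finset.sum_add_distrib]

lemma latticeResidue_eq_zero_iff (z : Fin d → ℤ) (M : ℕ) (h : Fin d → ℤ) :
    latticeResidue z M h = 0 ↔ (∑ s, h s * z s) % (M : ℤ) = 0 :=
  (ZMod.intCast_zmod_eq_zero_iff_dvd _ _).trans Int.dvd_iff_emod_eq_zero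

lemma uniqRec_iff (I : Finset (Fin d → ℤ)) (z : Fin d → ℤ) (M : ℕ) (k : Fin d → ℤ) :
    uniqRec d I z M k ↔ ∀ h ∈ I, latticeResidue z M h = latticeResidue z M k → h = k := by
  refine forall₂_congr fun h _ => ?_
  rw [← ZMod.intCast_eq_intCast_iff, not_imp_comm, not_not, eq_comm]
  rfl

lemma tsum_aliasing_eq_tsum_fiber {E : Type*} [AddCommMonoid E] [TopologicalSpace E]
    (z : Fin d → ℤ) (M : ℕ) (f : (Fin d → ℤ) → E) (k : Fin d → ℤ) :
    ∑' h : {h : Fin d → ℤ // (∑ s, h s * z s) % (M : ℤ) = 0}, f (k + h.1)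
      = ∑' k' : latticeResidue z M ⁻¹' {latticeResidue z M k}, f k' := by
  let e : {h : Fin d → ℤ // (∑ s, h s * z s) % (M : ℤ) = 0}
      ≃ latticeResidue z M ⁻¹' {latticeResidue z M k} :=
    { toFun := fun h => ⟨k + h.1, by
        simp [(latticeResidue_eq_zero_iff z M h.1).mpr h.2]⟩
      invFun := fun k' => ⟨k'.1 - k, by
        rw [← latticeResidue_eq_zero_iff, map_sub, sub_eq_zero]; exact k'.2⟩
      left_inv := fun h => by simp
      right_inv := fun k' => by simp }
  exact e.tsum_eq (fun k' => f k')

lemma sum_tsum_aliases_le {a : (Fin d → ℤ) → ℝ} (ha : 0 ≤ a) {I : Finset (Fin d → ℤ)}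
    (hI : Summable fun k : {k // k ∉ I} => a k) (z : Fin d → ℤ) (M : ℕ)
    (F : Finset (Fin d → ℤ)) (hF : ∀ k ∈ F, k ∈ I ∧ uniqRec d I z M k) :
    ∑ k ∈ F, ∑' k' : ↥(latticeResidue z M ⁻¹' {latticeResidue z M k} \ {k}), a k'
      ≤ ∑' k : {k // k ∉ I}, a k := by
  have hsub : ∀ k ∈ F, latticeResidue z M ⁻¹' {latticeResidue z M k} \ {k} ⊆ {k' | k' ∉ I} :=
    fun k hk k' ⟨hres, hne⟩ hk'I => hne ((uniqRec_iff I z M k).mp (hF k hk).2 k' hk'I hres)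
  have hdisj : (F : Set (Fin d → ℤ)).PairwiseDisjoint
      fun k => latticeResidue z M ⁻¹' {latticeResidue z M k} \ {k} := by
    intro k₁ hk₁ k₂ _ hne
    refine Set.disjoint_left.mpr fun k' ⟨h₁, _⟩ ⟨h₂, _⟩ => hne ?_
    exact ((uniqRec_iff I z M k₁).mp (hF k₁ hk₁).2 k₂ (hF k₂ ‹_›).1 (h₂.symm.trans h₁)).symm
  exact sum_tsum_le_tsum_of_pairwiseDisjoint ha hI F hsub hdisj

end RankOneLattice

section MultipleRankOneLattice

variable {d L : ℕ} {I : Finset (Fin d → ℤ)} {z : Fin L → Fin d → ℤ} {M : Fin L → ℕ}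

lemma mem_Lset {k : Fin d → ℤ} {ℓ : Fin L} :
    ℓ ∈ Lset d L I z M k ↔ uniqRec d I (z ℓ) (M ℓ) k := by
  simp [Lset]

lemma norm_sub_coefML_le {fhat : (Fin d → ℤ) → ℂ} (hsum : Summable fun k => ‖fhat k‖)
    {k : Fin d → ℤ} (hk : (Lset d L I z M k).Nonempty) :
    ‖fhat k - coefML d L I z M fhat k‖ ≤ ∑ ℓ ∈ Lset d L I z M k,
      ∑' k' : ↥(latticeResidue (z ℓ) (M ℓ) ⁻¹' {latticeResidue (z ℓ) (M ℓ) k} \ {k}),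
        ‖fhat k'‖ := by
  refine (norm_sub_inv_card_mul_sum_le hk _ _).trans (Finset.sum_le_sum fun ℓ _ => ?_)
  rw [tsum_aliasing_eq_tsum_fiber]
  exact norm_sub_tsum_subtype_le hsum rfl

lemma sum_norm_sub_coefML_le {fhat : (Fin d → ℤ) → ℂ} (hsum : Summable fun k => ‖fhat k‖)
    (hrec : ∀ k ∈ I, ∃ ℓ, uniqRec d I (z ℓ) (M ℓ) k) :
    ∑ k ∈ I, ‖fhat k - coefML d L I z M fhat k‖ ≤ L * ∑' k : {k // k ∉ I}, ‖fhat k‖ := by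
  calc ∑ k ∈ I, ‖fhat k - coefML d L I z M fhat k‖
      ≤ ∑ k ∈ I, ∑ ℓ ∈ Lset d L I z M k,
          ∑' k' : ↥(latticeResidue (z ℓ) (M ℓ) ⁻¹' {latticeResidue (z ℓ) (M ℓ) k} \ {k}),
            ‖fhat k'‖ :=
        Finset.sum_le_sum fun k hk =>
          norm_sub_coefML_le hsum (by obtain ⟨ℓ, hℓ⟩ := hrec k hk; exact ⟨ℓ, mem_Lset.mpr hℓ⟩)
    _ = ∑ ℓ, ∑ k ∈ I.filter (ℓ ∈ Lset d L I z M ·),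
          ∑' k' : ↥(latticeResidue (z ℓ) (M ℓ) ⁻¹' {latticeResidue (z ℓ) (M ℓ) k} \ {k}),
            ‖fhat k'‖ :=
        Finset.sum_comm' fun k ℓ => by simp
    _ ≤ ∑ _ℓ : Fin L, ∑' k : {k // k ∉ I}, ‖fhat k‖ :=
        Finset.sum_le_sum fun ℓ _ => sum_tsum_aliases_le (fun _ => norm_nonneg _)
          (hsum.subtype _) _ _ _ fun k hk => by
            rw [Finset.mem_filter, mem_Lset] at hk; exact hk
    _ = L * ∑' k : {k // k ∉ I}, ‖fhat k‖ := by simp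

end MultipleRankOneLattice

lemma norm_exp_two_pi_I_mul_sum {d : ℕ} (k : Fin d → ℤ) (x : Fin d → ℝ) :
    ‖Complex.exp (2 * (Real.pi : ℂ) * Complex.I * ∑ s, (k s : ℂ) * (x s : ℂ))‖ = 1 := by
  rw [show 2 * (Real.pi : ℂ) * Complex.I * ∑ s, (k s : ℂ) * (x s : ℂ)
      = ((2 * Real.pi * ∑ s, (k s : ℝ) * x s : ℝ) : ℂ) * Complex.I by push_cast; ring]
  exact Complex.norm_exp_ofReal_mul_I _

theorem stmt13_general (d L : ℕ) (α β N : ℝ) (hβ : 0 ≤ β) (hα : α > -β) (hN : 1 ≤ N)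
    (I : Finset (Fin d → ℤ)) (hI : ∀ k : Fin d → ℤ, k ∈ I ↔ idxMem d α β N k)
    (z : Fin L → Fin d → ℤ) (M : Fin L → ℕ)
    (fhat : (Fin d → ℤ) → ℂ)
    (hsum : Summable fun k => ‖fhat k‖)
    (hA : Summable fun k => wt d α β k * ‖fhat k‖)
    (hrec : ∀ k ∈ I, ∃ ℓ, uniqRec d I (z ℓ) (M ℓ) k) :
    (∀ x : Fin d → ℝ,
      ‖(∑' k : Fin d → ℤ, fhat k *
              Complex.exp (2 * (Real.pi : ℂ) * Complex.I * ∑ s, (k s : ℂ) * (x s : ℂ))) -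
            ∑ k ∈ I, coefML d L I z M fhat k *
              Complex.exp (2 * (Real.pi : ℂ) * Complex.I * ∑ s, (k s : ℂ) * (x s : ℂ))‖
        ≤ (∑' k : {k : Fin d → ℤ // k ∉ I}, ‖fhat k.1‖) +
            ∑ k ∈ I, ‖fhat k - coefML d L I z M fhat k‖) ∧
    ((∑' k : {k : Fin d → ℤ // k ∉ I}, ‖fhat k.1‖) +
        ∑ k ∈ I, ‖fhat k - coefML d L I z M fhat k‖
      ≤ N ^ (-(α + β)) * (1 + (L : ℝ)) *
          ∑' k : Fin d → ℤ, wt d α β k * ‖fhat k‖) := by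
  have hN0 : 0 < N := zero_lt_one.trans_le hN
  refine ⟨fun x => norm_tsum_mul_sub_sum_mul_le hsum
    (fun k => (norm_exp_two_pi_I_mul_sum k x).le) I _, ?_⟩
  have htail : ∑' k : {k // k ∉ I}, ‖fhat k‖ ≤ N ^ (-(α + β)) * ∑' k, wt d α β k * ‖fhat k‖ := by
    rw [Real.rpow_neg hN0.le]
    exact tsum_compl_le_inv_mul_tsum (fun _ => norm_nonneg _) (wt_nonneg α β) hA
      (Real.rpow_pos_of_pos hN0 _) fun k hk =>
        rpow_le_wt_of_not_idxMem hβ hα hN0 fun h => hk ((hI k).mpr h)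
  calc (∑' k : {k // k ∉ I}, ‖fhat k‖) + ∑ k ∈ I, ‖fhat k - coefML d L I z M fhat k‖
      ≤ (1 + L) * ∑' k : {k // k ∉ I}, ‖fhat k‖ := by
        linarith [sum_norm_sub_coefML_le (z := z) (M := M) hsum hrec]
    _ ≤ (1 + L) * (N ^ (-(α + β)) * ∑' k, wt d α β k * ‖fhat k‖) := by gcongr
    _ = N ^ (-(α + β)) * (1 + L) * ∑' k, wt d α β k * ‖fhat k‖ := by ring

theorem stmt13 (d L : ℕ) (α β N : ℝ) (hβ : 0 ≤ β) (hα : α > -β) (hN : 1 ≤ N)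
    (I : Finset (Fin d → ℤ)) (hI : ∀ k : Fin d → ℤ, k ∈ I ↔ idxMem d α β N k)
    (z : Fin L → Fin d → ℤ) (M : Fin L → ℕ) (hM : ∀ ℓ, 0 < M ℓ)
    (fhat : (Fin d → ℤ) → ℂ)
    (hsum : Summable fun k => ‖fhat k‖)
    (hA : Summable fun k => wt d α β k * ‖fhat k‖)
    (hrec : ∀ k ∈ I, ∃ ℓ, uniqRec d I (z ℓ) (M ℓ) k) :
    (∀ x : Fin d → ℝ,
      ‖(∑' k : Fin d → ℤ, fhat k *
              Complex.exp (2 * (Real.pi : ℂ) * Complex.I * ∑ s, (k s : ℂ) * (x s : ℂ))) -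
            ∑ k ∈ I, coefML d L I z M fhat k *
              Complex.exp (2 * (Real.pi : ℂ) * Complex.I * ∑ s, (k s : ℂ) * (x s : ℂ))‖
        ≤ (∑' k : {k : Fin d → ℤ // k ∉ I}, ‖fhat k.1‖) +
            ∑ k ∈ I, ‖fhat k - coefML d L I z M fhat k‖) ∧
    ((∑' k : {k : Fin d → ℤ // k ∉ I}, ‖fhat k.1‖) +
        ∑ k ∈ I, ‖fhat k - coefML d L I z M fhat k‖
      ≤ N ^ (-(α + β)) * (1 + (L : ℝ)) *
          ∑' k : Fin d → ℤ, wt d α β k * ‖fhat k‖) :=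
  stmt13_general d L α β N hβ hα hN I hI z M fhat hsum hA hrec
end

section
/- Aliasing error in H^{r,t} norm: Let f ∈ A^{α,β}(T^d) ∩ C(T^d), I = I_N^{d,T} with T ∈ [-r/t, 1) (T := -∞ if t = 0), and let Λ be a multiple rank-1 lattice of L single lattices fulfilling the reconstruction property for I. Then ‖S_I f − S^Λ_I f‖_{H^{r,t}(T^d)} ≤ (max_{k∈I} ω^{r,t}(k)) · L · Σ_{k∈Z^d\I} |f̂_k|. -/
open scoped BigOperators

/-- The aliasing-tail for a single lattice and single frequency. -/
noncomputable def tS (d : ℕ) (zl : Fin d → ℤ) (Ml : ℕ) (fhat : (Fin d → ℤ) → ℂ)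
    (k : Fin d → ℤ) : ℝ :=
  ∑' h : {h : Fin d → ℤ // (∑ s, h s * zl s) % ((Ml : ℤ)) = 0},
    if h.1 = 0 then 0 else ‖fhat (k + h.1)‖

lemma tS_nonneg (d : ℕ) (zl : Fin d → ℤ) (Ml : ℕ) (fhat : (Fin d → ℤ) → ℂ)
    (k : Fin d → ℤ) : 0 ≤ tS d zl Ml fhat k := by
  refine tsum_nonneg fun h => ?_
  split
  · exact le_rfl
  · exact norm_nonneg _

/-- the sum over a set of frequencies, uniquely reconstructable w.r.t. one lattice,
of the aliasing tails is at most the total tail outside `I`. -/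
lemma key_lattice (d : ℕ) (I : Finset (Fin d → ℤ)) (zl : Fin d → ℤ) (Ml : ℕ)
    (fhat : (Fin d → ℤ) → ℂ) (hsum : Summable fun k => ‖fhat k‖)
    (S' : Finset (Fin d → ℤ)) (hS'I : ∀ k ∈ S', k ∈ I)
    (hS'u : ∀ k ∈ S', uniqRec d I zl Ml k) :
    ∑ k ∈ S', tS d zl Ml fhat k
      ≤ ∑' k : {k : Fin d → ℤ // k ∉ I}, ‖fhat k.1‖ := by
  classical
  set A : Set (Fin d → ℤ) := {h | (∑ s, h s * zl s) % ((Ml : ℤ)) = 0} with hA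
  set F : (Fin d → ℤ) → (Fin d → ℤ) → ℝ :=
    fun k h => if h = 0 then 0 else ‖fhat (k + h)‖ with hF
  set g : (Fin d → ℤ) → (Fin d → ℤ) → ℝ := fun k m => A.indicator (F k) (m - k) with hg
  have hF0 : ∀ k h, 0 ≤ F k h := by
    intro k h; rw [hF]; dsimp only; split
    · exact le_refl _
    · exact norm_nonneg _
  have hg0 : ∀ k m, 0 ≤ g k m := fun k m =>
    Set.indicator_nonneg (fun h _ => hF0 k h) _
  have hgle : ∀ k m, g k m ≤ ‖fhat m‖ := by
    intro k m
    rw [hg]; dsimp only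
    by_cases hmem : (m - k) ∈ A
    · rw [Set.indicator_of_mem hmem, hF]; dsimp only
      by_cases h0 : m - k = 0
      · rw [if_pos h0]; exact norm_nonneg _
      · rw [if_neg h0, add_sub_cancel]
    · rw [Set.indicator_of_notMem hmem]; exact norm_nonneg _
  have hgsum : ∀ k, Summable (g k) :=
    fun k => Summable.of_nonneg_of_le (hg0 k) (hgle k) hsum
  have step1 : ∀ k, tS d zl Ml fhat k = ∑' m, g k m := by
    intro k
    have h1 : tS d zl Ml fhat k = ∑' h : A, F k h.1 := by
      refine tsum_congr fun h => ?_
      rw [hF]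
    rw [h1, tsum_subtype A (F k)]
    exact ((Equiv.subRight k).tsum_eq (A.indicator (F k))).symm
  -- modular arithmetic fact
  have hmod : ∀ k m : Fin d → ℤ, (m - k) ∈ A →
      (∑ s, k s * zl s) ≡ (∑ s, m s * zl s) [ZMOD ((Ml : ℤ))] := by
    intro k m hk
    have hk' : (∑ s, ((m - k) s) * zl s) % ((Ml : ℤ)) = 0 := hk
    have hd : ((Ml : ℤ)) ∣ (∑ s, m s * zl s) - (∑ s, k s * zl s) := by
      have he : (∑ s, ((m - k) s) * zl s)
          = (∑ s, m s * zl s) - (∑ s, k s * zl s) := by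
        rw [← Finset.sum_sub_distrib]
        exact Finset.sum_congr rfl fun s _ => by simp [sub_mul]
      rw [← he]
      exact Int.dvd_of_emod_eq_zero hk'
    exact Int.modEq_iff_dvd.mpr hd
  have key : ∀ m, (∑ k ∈ S', g k m)
      ≤ Set.indicator {m : Fin d → ℤ | m ∉ I} (fun m => ‖fhat m‖) m := by
    intro m
    have hfacts : ∀ k, g k m ≠ 0 → (m - k) ∈ A ∧ m ≠ k := by
      intro k hgk
      have hmem : (m - k) ∈ A := by
        by_contra hc
        exact hgk (Set.indicator_of_notMem hc _)
      refine ⟨hmem, fun hmk => hgk ?_⟩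
      rw [hg]; dsimp only
      rw [Set.indicator_of_mem hmem, hF]; dsimp only
      rw [if_pos (by rw [hmk, sub_self])]
    by_cases hex : ∃ k ∈ S', g k m ≠ 0
    · obtain ⟨k0, hk0S, hk0⟩ := hex
      obtain ⟨hmem0, hne0⟩ := hfacts k0 hk0
      have hmI : m ∉ I := by
        intro hmI
        exact hS'u k0 hk0S m hmI hne0 (hmod k0 m hmem0)
      have hsum_eq : ∑ k ∈ S', g k m = g k0 m := by
        refine Finset.sum_eq_single_of_mem k0 hk0S fun k hk hne => ?_
        by_contra hgk
        obtain ⟨hmem1, _⟩ := hfacts k hgk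
        have htr : (∑ s, k s * zl s) ≡ (∑ s, k0 s * zl s) [ZMOD ((Ml : ℤ))] :=
          (hmod k m hmem1).trans (hmod k0 m hmem0).symm
        exact hS'u k hk k0 (hS'I k0 hk0S) hne.symm htr
      have hval : g k0 m = ‖fhat m‖ := by
        rw [hg]; dsimp only
        rw [Set.indicator_of_mem hmem0, hF]; dsimp only
        rw [if_neg (sub_ne_zero.mpr (Ne.symm (Ne.symm hne0)))]
        rw [add_sub_cancel]
      rw [hsum_eq, hval]
      exact le_of_eq (Set.indicator_of_mem (show m ∈ {m : Fin d → ℤ | m ∉ I} from hmI) (fun m => ‖fhat m‖)).symm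
    · push_neg at hex
      rw [Finset.sum_eq_zero hex]
      exact Set.indicator_nonneg (fun _ _ => norm_nonneg _) m
  calc ∑ k ∈ S', tS d zl Ml fhat k
      = ∑ k ∈ S', ∑' m, g k m := Finset.sum_congr rfl fun k _ => step1 k
    _ = ∑' m, ∑ k ∈ S', g k m := (Summable.tsum_finsetSum fun k _ => hgsum k).symm
    _ ≤ ∑' m, Set.indicator {m : Fin d → ℤ | m ∉ I} (fun m => ‖fhat m‖) m := by
        refine Summable.tsum_le_tsum key (summable_sum fun k _ => hgsum k) (hsum.indicator _)
    _ = ∑' k : {k : Fin d → ℤ // k ∉ I}, ‖fhat k.1‖ :=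
        (tsum_subtype {m : Fin d → ℤ | m ∉ I} (fun m => ‖fhat m‖)).symm

lemma diff_bound (d L : ℕ) (I : Finset (Fin d → ℤ)) (z : Fin L → Fin d → ℤ)
    (M : Fin L → ℕ) (fhat : (Fin d → ℤ) → ℂ)
    (hsum : Summable fun k => ‖fhat k‖)
    (k : Fin d → ℤ) (hk : (Lset d L I z M k).Nonempty) :
    ‖fhat k - coefML d L I z M fhat k‖
      ≤ ∑ ℓ ∈ Lset d L I z M k, tS d (z ℓ) (M ℓ) fhat k := by
  classical
  have hfa : Summable fhat := by
    refine Summable.of_norm ?_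
    simpa using hsum
  set S := Lset d L I z M k with hS
  set n := S.card with hn
  have hn0 : n ≠ 0 := by
    simpa [hn, Finset.card_eq_zero] using Finset.nonempty_iff_ne_empty.mp hk
  have hnC : ((n : ℂ)) ≠ 0 := Nat.cast_ne_zero.mpr hn0
  set Tl : Fin L → ℂ := fun ℓ =>
    ∑' h : {h : Fin d → ℤ // (∑ s, h s * (z ℓ) s) % ((M ℓ : ℤ)) = 0}, fhat (k + h.1)
    with hTl
  -- summability over the aliasing subtype
  have hSsub : ∀ ℓ : Fin L,
      Summable (fun h : {h : Fin d → ℤ // (∑ s, h s * (z ℓ) s) % ((M ℓ : ℤ)) = 0} =>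
        fhat (k + h.1)) := by
    intro ℓ
    have hinj : Function.Injective
        (fun h : {h : Fin d → ℤ // (∑ s, h s * (z ℓ) s) % ((M ℓ : ℤ)) = 0} => k + h.1) :=
      fun a b hab => Subtype.ext (add_left_cancel hab)
    exact hfa.comp_injective hinj
  have hSsubA : ∀ ℓ : Fin L,
      Summable (fun h : {h : Fin d → ℤ // (∑ s, h s * (z ℓ) s) % ((M ℓ : ℤ)) = 0} =>
        ‖fhat (k + h.1)‖) := by
    intro ℓ
    have hinj : Function.Injective
        (fun h : {h : Fin d → ℤ // (∑ s, h s * (z ℓ) s) % ((M ℓ : ℤ)) = 0} => k + h.1) :=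
      fun a b hab => Subtype.ext (add_left_cancel hab)
    exact hsum.comp_injective hinj
  -- per-lattice error bound
  have hper : ∀ ℓ : Fin L, ‖fhat k - Tl ℓ‖ ≤ tS d (z ℓ) (M ℓ) fhat k := by
    intro ℓ
    set e0 : {h : Fin d → ℤ // (∑ s, h s * (z ℓ) s) % ((M ℓ : ℤ)) = 0} :=
      ⟨0, by simp⟩ with he0
    have hsplit : Tl ℓ = fhat (k + e0.1)
        + ∑' h : {h : Fin d → ℤ // (∑ s, h s * (z ℓ) s) % ((M ℓ : ℤ)) = 0},
            if h = e0 then 0 else fhat (k + h.1) :=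
      (hSsub ℓ).tsum_eq_add_tsum_ite e0
    have hke0 : fhat (k + e0.1) = fhat k := by
      simp [he0]
    have hdiff : fhat k - Tl ℓ
        = -∑' h : {h : Fin d → ℤ // (∑ s, h s * (z ℓ) s) % ((M ℓ : ℤ)) = 0},
            if h = e0 then 0 else fhat (k + h.1) := by
      rw [hsplit, hke0]; ring
    rw [hdiff, norm_neg]
    have hnormsum : Summable (fun h : {h : Fin d → ℤ // (∑ s, h s * (z ℓ) s) % ((M ℓ : ℤ)) = 0} =>
        ‖if h = e0 then 0 else fhat (k + h.1)‖) := by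
      refine Summable.of_nonneg_of_le (fun h => norm_nonneg _) (fun h => ?_) (hSsubA ℓ)
      split
      · simpa using norm_nonneg _
      · simp
    refine le_trans (by simpa using norm_tsum_le_tsum_norm hnormsum) ?_
    refine le_of_eq (tsum_congr fun h => ?_)
    by_cases h0 : h.1 = (0 : Fin d → ℤ)
    · rw [if_pos (Subtype.ext (by simpa [he0] using h0)), if_pos h0]
      simp
    · rw [if_neg (fun he => h0 (by simp [he, he0])), if_neg h0]
  -- decompose the averaged coefficient
  have hco : fhat k - coefML d L I z M fhat k
      = ((n : ℂ))⁻¹ * ∑ ℓ ∈ S, (fhat k - Tl ℓ) := by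
    have h1 : ∑ ℓ ∈ S, (fhat k - Tl ℓ) = (n : ℂ) * fhat k - ∑ ℓ ∈ S, Tl ℓ := by
      rw [Finset.sum_sub_distrib, Finset.sum_const, nsmul_eq_mul]
    rw [h1, mul_sub, ← mul_assoc, inv_mul_cancel₀ hnC, one_mul, coefML]
  rw [hco]
  calc ‖((n : ℂ))⁻¹ * ∑ ℓ ∈ S, (fhat k - Tl ℓ)‖
      = ((n : ℝ))⁻¹ * ‖∑ ℓ ∈ S, (fhat k - Tl ℓ)‖ := by
        rw [norm_mul, norm_inv, Complex.norm_natCast]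
    _ ≤ ((n : ℝ))⁻¹ * ∑ ℓ ∈ S, ‖fhat k - Tl ℓ‖ := by
        refine mul_le_mul_of_nonneg_left (norm_sum_le _ _) ?_
        positivity
    _ ≤ ((n : ℝ))⁻¹ * ∑ ℓ ∈ S, tS d (z ℓ) (M ℓ) fhat k := by
        refine mul_le_mul_of_nonneg_left (Finset.sum_le_sum fun ℓ _ => hper ℓ) ?_
        positivity
    _ ≤ 1 * ∑ ℓ ∈ S, tS d (z ℓ) (M ℓ) fhat k := by
        refine mul_le_mul_of_nonneg_right ?_
          (Finset.sum_nonneg fun ℓ _ => tS_nonneg d (z ℓ) (M ℓ) fhat k)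
        rw [inv_le_one_iff₀]
        right
        exact_mod_cast Nat.one_le_iff_ne_zero.mpr hn0
    _ = ∑ ℓ ∈ S, tS d (z ℓ) (M ℓ) fhat k := one_mul _

theorem stmt15 (d L : ℕ) (r t T N B : ℝ) (ht : 0 ≤ t) (hT1 : T < 1)
    (hTlb : 0 < t → -r / t ≤ T) (hN : 1 ≤ N)
    (I : Finset (Fin d → ℤ))
    (hI : ∀ k : Fin d → ℤ, k ∈ I ↔
      (max 1 (∑ s, |(k s : ℝ)|)) ^ (-T) * ∏ s, max 1 |(k s : ℝ)| ≤ N ^ (1 - T))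
    (z : Fin L → Fin d → ℤ) (M : Fin L → ℕ) (hM : ∀ ℓ, 0 < M ℓ)
    (fhat : (Fin d → ℤ) → ℂ) (hsum : Summable fun k => ‖fhat k‖)
    (hrec : ∀ k ∈ I, ∃ ℓ, uniqRec d I (z ℓ) (M ℓ) k)
    (hB : ∀ k ∈ I, wt d r t k ≤ B) :
    Real.sqrt (∑ k ∈ I,
        (wt d r t k) ^ 2 * ‖fhat k - coefML d L I z M fhat k‖ ^ 2)
      ≤ B * (L : ℝ) * ∑' k : {k : Fin d → ℤ // k ∉ I}, ‖fhat k.1‖ := by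
  classical
  have hw0 : ∀ k : Fin d → ℤ, 0 ≤ wt d r t k := by
    intro k
    refine mul_nonneg (Real.rpow_nonneg (le_trans zero_le_one (le_max_left _ _)) _) ?_
    exact Finset.prod_nonneg fun s _ =>
      Real.rpow_nonneg (le_trans zero_le_one (le_max_left _ _)) _
  have h0I : (0 : Fin d → ℤ) ∈ I := by
    rw [hI]
    have hle : (1:ℝ) ≤ N ^ (1 - T) := by
      calc (1:ℝ) = N ^ (0:ℝ) := (Real.rpow_zero N).symm
        _ ≤ N ^ (1 - T) := Real.rpow_le_rpow_of_exponent_le hN (by linarith)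
    simpa using hle
  have hB0 : (0:ℝ) ≤ B := le_trans (hw0 0) (hB 0 h0I)
  set tail := ∑' k : {k : Fin d → ℤ // k ∉ I}, ‖fhat k.1‖ with htail
  have htail0 : 0 ≤ tail := tsum_nonneg fun _ => norm_nonneg _
  have hdiff : ∀ k ∈ I, ‖fhat k - coefML d L I z M fhat k‖
      ≤ ∑ ℓ ∈ Lset d L I z M k, tS d (z ℓ) (M ℓ) fhat k := by
    intro k hk
    refine diff_bound d L I z M fhat hsum k ?_
    obtain ⟨ℓ, hℓ⟩ := hrec k hk
    exact ⟨ℓ, by simp [Lset, hℓ]⟩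
  have habs0 : ∀ k : Fin d → ℤ,
      0 ≤ wt d r t k * ‖fhat k - coefML d L I z M fhat k‖ :=
    fun k => mul_nonneg (hw0 k) (norm_nonneg _)
  have hstep1 : Real.sqrt (∑ k ∈ I,
        (wt d r t k) ^ 2 * ‖fhat k - coefML d L I z M fhat k‖ ^ 2)
      ≤ ∑ k ∈ I, wt d r t k * ‖fhat k - coefML d L I z M fhat k‖ := by
    rw [show (∑ k ∈ I,
        (wt d r t k) ^ 2 * ‖fhat k - coefML d L I z M fhat k‖ ^ 2)
        = ∑ k ∈ I,
          (wt d r t k * ‖fhat k - coefML d L I z M fhat k‖) ^ 2 from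
      Finset.sum_congr rfl fun k _ => (mul_pow _ _ 2).symm]
    refine le_trans (Real.sqrt_le_sqrt
      (Finset.sum_sq_le_sq_sum_of_nonneg fun k _ => habs0 k)) ?_
    rw [Real.sqrt_sq (Finset.sum_nonneg fun k _ => habs0 k)]
  refine hstep1.trans ?_
  have hstep2 : ∑ k ∈ I, wt d r t k * ‖fhat k - coefML d L I z M fhat k‖
      ≤ B * ∑ k ∈ I, ∑ ℓ ∈ Lset d L I z M k, tS d (z ℓ) (M ℓ) fhat k := by
    rw [Finset.mul_sum]
    refine Finset.sum_le_sum fun k hk => ?_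
    exact mul_le_mul (hB k hk) (hdiff k hk) (norm_nonneg _) hB0
  refine hstep2.trans ?_
  have hswap : ∑ k ∈ I, ∑ ℓ ∈ Lset d L I z M k, tS d (z ℓ) (M ℓ) fhat k
      = ∑ ℓ : Fin L, ∑ k ∈ I.filter (fun k => ℓ ∈ Lset d L I z M k),
          tS d (z ℓ) (M ℓ) fhat k := by
    have h1 : ∀ k, ∑ ℓ ∈ Lset d L I z M k, tS d (z ℓ) (M ℓ) fhat k
        = ∑ ℓ : Fin L, if ℓ ∈ Lset d L I z M k then tS d (z ℓ) (M ℓ) fhat k else 0 := by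
      intro k
      rw [Finset.sum_ite_mem, Finset.univ_inter]
    rw [Finset.sum_congr rfl fun k _ => h1 k, Finset.sum_comm]
    exact Finset.sum_congr rfl fun ℓ _ => (Finset.sum_filter _ _).symm
  rw [hswap]
  have hstep3 : ∑ ℓ : Fin L, ∑ k ∈ I.filter (fun k => ℓ ∈ Lset d L I z M k),
      tS d (z ℓ) (M ℓ) fhat k ≤ (L : ℝ) * tail := by
    calc ∑ ℓ : Fin L, ∑ k ∈ I.filter (fun k => ℓ ∈ Lset d L I z M k),
          tS d (z ℓ) (M ℓ) fhat k
        ≤ ∑ _ℓ : Fin L, tail := by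
          refine Finset.sum_le_sum fun ℓ _ => ?_
          refine key_lattice d I (z ℓ) (M ℓ) fhat hsum _
            (fun k hk => (Finset.mem_filter.mp hk).1) (fun k hk => ?_)
          have h2 := (Finset.mem_filter.mp hk).2
          simpa [Lset] using h2
      _ = (L : ℝ) * tail := by
          rw [Finset.sum_const, Finset.card_univ, Fintype.card_fin, nsmul_eq_mul]
  calc B * ∑ ℓ : Fin L, ∑ k ∈ I.filter (fun k => ℓ ∈ Lset d L I z M k),
        tS d (z ℓ) (M ℓ) fhat k
      ≤ B * ((L : ℝ) * tail) := mul_le_mul_of_nonneg_left hstep3 hB0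
    _ = B * (L : ℝ) * tail := by ring
end

section
/- Generalized weight maximum on the index set: For shape parameter T ∈ [-r/t, 1) (with t > 0, r ≥ 0) and refinement N ≥ 1, the maximum of ω^{r,t} over I_N^{d,T} satisfies max_{k ∈ I_N^{d,T}} ω^{r,t}(k) ≤ d^{(Tt+r)/(1-T)} · N^{r+t}. -/
/-!
Write `M = max(1, ‖k‖₁)` and `P = ∏ₛ max(1, |kₛ|)`, so that `ω^{r,t}(k) = M^r P^t`. Membership in
the index set says `P ≤ M^T N^{1-T}`, and each `|kₛ|` is at most `P`, so `M ≤ d P`. Together these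
give `M^{1-T} ≤ d N^{1-T}`, i.e. `M ≤ d^{1/(1-T)} N`. Hence
`M^r P^t ≤ M^{r+Tt} N^{(1-T)t} ≤ d^{(r+Tt)/(1-T)} N^{r+t}`, the second inequality using `r + Tt ≥ 0`.
-/

open scoped BigOperators

lemma max_one_sum_abs_le_card_mul_prod {ι : Type*} [Fintype ι] [Nonempty ι] (x : ι → ℝ) :
    max 1 (∑ i, |x i|) ≤ Fintype.card ι * ∏ i, max 1 |x i| := by
  have hP : 1 ≤ ∏ i, max 1 |x i| := Finset.one_le_prod fun i _ => le_max_left _ _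
  have hcard : (1 : ℝ) ≤ Fintype.card ι := by exact_mod_cast Fintype.card_pos
  refine max_le (one_le_mul_of_one_le_of_one_le hcard hP) ?_
  have hterm : ∀ i ∈ Finset.univ, |x i| ≤ ∏ j, max 1 |x j| := fun i hi => by
    simpa only [max_comm] using Finset.le_prod_max_one hi fun j => |x j|
  simpa using Finset.sum_le_card_nsmul _ _ _ hterm

lemma le_rpow_mul_of_rpow_neg_mul_le {M P X T : ℝ} (hM : 0 < M) (h : M ^ (-T) * P ≤ X) :
    P ≤ M ^ T * X := by
  rwa [Real.rpow_neg hM.le, inv_mul_le_iff₀ (Real.rpow_pos_of_pos hM T)] at h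

lemma le_rpow_inv_mul_of_le_mul_rpow {M D N T : ℝ} (hM : 0 < M) (hD : 0 ≤ D) (hN : 0 ≤ N)
    (hT : T < 1) (h : M ≤ D * (M ^ T * N ^ (1 - T))) : M ≤ D ^ (1 - T)⁻¹ * N := by
  have hT' : 0 < 1 - T := sub_pos.mpr hT
  have hMT : M ^ (1 - T) ≤ D * N ^ (1 - T) := by
    rw [Real.rpow_sub hM, Real.rpow_one, div_le_iff₀ (Real.rpow_pos_of_pos hM T)]
    linarith
  calc M ≤ (D * N ^ (1 - T)) ^ (1 - T)⁻¹ :=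
        (Real.le_rpow_inv_iff_of_pos hM.le (by positivity) hT').mpr hMT
    _ = D ^ (1 - T)⁻¹ * N := by
        rw [Real.mul_rpow hD (by positivity), Real.rpow_rpow_inv hN hT'.ne']

lemma rpow_mul_rpow_le_of_le_rpow_mul {M P D N r t T : ℝ} (hM : 0 < M) (hP : 0 ≤ P)
    (hD : 0 ≤ D) (hN : 0 < N) (hT : T < 1) (ht : 0 ≤ t) (hrt : 0 ≤ r + T * t)
    (hPM : P ≤ M ^ T * N ^ (1 - T)) (hMP : M ≤ D * P) :
    M ^ r * P ^ t ≤ D ^ ((T * t + r) / (1 - T)) * N ^ (r + t) := by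
  have hMN : M ≤ D ^ (1 - T)⁻¹ * N := le_rpow_inv_mul_of_le_mul_rpow hM hD hN.le hT
    (hMP.trans (mul_le_mul_of_nonneg_left hPM hD))
  calc M ^ r * P ^ t ≤ M ^ r * (M ^ T * N ^ (1 - T)) ^ t := by gcongr
    _ = M ^ (r + T * t) * N ^ ((1 - T) * t) := by
        rw [Real.mul_rpow (by positivity) (by positivity), ← Real.rpow_mul hM.le,
          ← Real.rpow_mul hN.le, ← mul_assoc, ← Real.rpow_add hM]
    _ ≤ (D ^ (1 - T)⁻¹ * N) ^ (r + T * t) * N ^ ((1 - T) * t) := by gcongr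
    _ = D ^ ((T * t + r) / (1 - T)) * N ^ (r + t) := by
        rw [Real.mul_rpow (by positivity) hN.le, ← Real.rpow_mul hD, mul_assoc,
          ← Real.rpow_add hN]
        ring_nf

theorem stmt18_general (d : ℕ) (hd : 0 < d) (r t T N : ℝ) (ht : 0 < t)
    (hT1 : T < 1) (hT0 : -r / t ≤ T) (hN : 1 ≤ N) (k : Fin d → ℤ)
    (hk : (max 1 (∑ s, |(k s : ℝ)|)) ^ (-T) * ∏ s, max 1 |(k s : ℝ)| ≤ N ^ (1 - T)) :
    wt d r t k ≤ (d : ℝ) ^ ((T * t + r) / (1 - T)) * N ^ (r + t) := by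
  have : Nonempty (Fin d) := Fin.pos_iff_nonempty.mp hd
  have hM : (0 : ℝ) < max 1 (∑ s, |(k s : ℝ)|) := lt_max_of_lt_left one_pos
  have hP : (0 : ℝ) ≤ ∏ s, max 1 |(k s : ℝ)| :=
    Finset.prod_nonneg fun s _ => zero_le_one.trans (le_max_left _ _)
  have hrt : 0 ≤ r + T * t := by linarith [(div_le_iff₀ ht).mp hT0]
  have hMP := max_one_sum_abs_le_card_mul_prod fun s => (k s : ℝ)
  rw [Fintype.card_fin] at hMP
  rw [wt, Real.finsetProd_rpow _ _ (fun s _ => zero_le_one.trans (le_max_left _ _))]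
  exact rpow_mul_rpow_le_of_le_rpow_mul hM hP d.cast_nonneg (zero_lt_one.trans_le hN) hT1
    ht.le hrt (le_rpow_mul_of_rpow_neg_mul_le hM hk) hMP

theorem stmt18 (d : ℕ) (hd : 0 < d) (r t T N : ℝ) (hr : 0 ≤ r) (ht : 0 < t)
    (hT1 : T < 1) (hT0 : -r / t ≤ T) (hN : 1 ≤ N) (k : Fin d → ℤ)
    (hk : (max 1 (∑ s, |(k s : ℝ)|)) ^ (-T) * ∏ s, max 1 |(k s : ℝ)| ≤ N ^ (1 - T)) :
    wt d r t k ≤ (d : ℝ) ^ ((T * t + r) / (1 - T)) * N ^ (r + t) :=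
  stmt18_general d hd r t T N ht hT1 hT0 hN k hk
end

section
/- Reconstruction via multiple rank-1 lattices: Let I ⊂ Z^d be finite and Λ = Λ(z_1,M_1,...,z_L,M_L) a multiple rank-1 lattice fulfilling ∪_{ℓ=1}^L I_ℓ = I with I_ℓ := {k ∈ I : k·z_ℓ ≢ h·z_ℓ (mod M_ℓ) ∀h ∈ I\{k}}. Then every trigonometric polynomial p ∈ Π_I is exactly recovered by the averaging procedure: for each k ∈ I, p̂_k = (1/|L_k|)·Σ_{ℓ∈L_k} (1/M_ℓ)·Σ_{j=0}^{M_ℓ−1} p((j/M_ℓ)z_ℓ mod 1)·e^{−2πi j k·z_ℓ/M_ℓ}, where L_k := {ℓ : k ∈ I_ℓ}. -/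
/-!
On a rank-1 lattice with `M` points, `∑_{j<M} e^{2πi j n / M}` equals `M` if `M ∣ n` and `0`
otherwise. Hence the lattice rule applied to `p(x) e^{-2πi k·x}` returns the sum of the
coefficients `p̂_h` with `h·z ≡ k·z (mod M)`, which is `p̂_k` alone when `ℓ ∈ L_k`. The
reconstruction property makes `L_k` nonempty, so the average over `L_k` of these equal values
is `p̂_k`.
-/

open scoped BigOperators

open Complex Finset
open scoped Real

lemma sum_range_exp_two_pi_I_mul_div (M : ℕ) (hM : M ≠ 0) (n : ℤ) :
    ∑ j ∈ range M, exp (2 * π * I * j * n / M) = if (M : ℤ) ∣ n then (M : ℂ) else 0 := by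
  have hζ := isPrimitiveRoot_exp M hM
  set ω := exp (2 * π * I / M) ^ n
  have hterm (j : ℕ) : exp (2 * π * I * j * n / M) = ω ^ j := by
    rw [← zpow_natCast, ← zpow_mul, ← exp_int_mul]
    push_cast
    ring_nf
  have hωM : ω ^ M = 1 := by
    rw [← zpow_natCast, ← zpow_mul, mul_comm n, zpow_mul, zpow_natCast, hζ.pow_eq_one, one_zpow]
  simp_rw [hterm]
  split_ifs with hdvd
  · simp [(hζ.zpow_eq_one_iff_dvd n).mpr hdvd, ω]
  · have hω : ω ≠ 1 := mt (hζ.zpow_eq_one_iff_dvd n).mp hdvd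
    rw [geom_sum_eq hω, hωM, sub_self, zero_div]

lemma coeff_eq_lattice_quadrature {ι : Type*} (S : Finset ι) (c : ι → ℂ) (f : ι → ℤ)
    (M : ℕ) (hM : M ≠ 0) {k : ι} (hk : k ∈ S)
    (hnoalias : ∀ h ∈ S, h ≠ k → ¬ f k ≡ f h [ZMOD M]) :
    c k = 1 / (M : ℂ) * ∑ j ∈ range M,
      (∑ i ∈ S, c i * exp (2 * π * I * j * f i / M)) * exp (-(2 * π * I) * j * f k / M) := by
  have hswap : ∑ j ∈ range M,
      (∑ i ∈ S, c i * exp (2 * π * I * j * f i / M)) * exp (-(2 * π * I) * j * f k / M) =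
      ∑ i ∈ S, c i * ∑ j ∈ range M, exp (2 * π * I * j * ((f i - f k : ℤ) : ℂ) / M) := by
    simp_rw [sum_mul, mul_sum]
    rw [sum_comm]
    refine sum_congr rfl fun i _ => sum_congr rfl fun j _ => ?_
    rw [mul_assoc, ← exp_add]
    push_cast
    ring_nf
  have hdiag : ∑ i ∈ S, c i * ∑ j ∈ range M, exp (2 * π * I * j * ((f i - f k : ℤ) : ℂ) / M) =
      c k * M := by
    simp_rw [sum_range_exp_two_pi_I_mul_div M hM]
    rw [sum_eq_single_of_mem k hk]
    · simp
    · intro i hi hik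
      rw [if_neg fun hdvd => hnoalias i hi hik (Int.modEq_iff_dvd.mpr hdvd), mul_zero]
  have : (M : ℂ) ≠ 0 := Nat.cast_ne_zero.mpr hM
  rw [hswap, hdiag]
  field_simp

lemma coeff_eq_rank1_lattice_quadrature {d : ℕ} (I : Finset (Fin d → ℤ)) (z : Fin d → ℤ) (M : ℕ)
    (hM : M ≠ 0) (phat : (Fin d → ℤ) → ℂ) {k : Fin d → ℤ} (hk : k ∈ I)
    (hrec : uniqRec d I z M k) :
    phat k = 1 / (M : ℂ) * ∑ j ∈ range M,
      (∑ k' ∈ I, phat k' * exp (2 * π * Complex.I * j * (∑ s, (k' s : ℂ) * (z s : ℂ)) / M)) *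
        exp (-(2 * π * Complex.I) * j * (∑ s, (k s : ℂ) * (z s : ℂ)) / M) := by
  have hcast (h : Fin d → ℤ) : ∑ s, (h s : ℂ) * (z s : ℂ) = ((∑ s, h s * z s : ℤ) : ℂ) := by
    push_cast
    rfl
  simp_rw [hcast]
  exact coeff_eq_lattice_quadrature I phat (fun h => ∑ s, h s * z s) M hM hk hrec

theorem stmt19 (d L : ℕ) (I : Finset (Fin d → ℤ)) (z : Fin L → Fin d → ℤ) (M : Fin L → ℕ)
    (hM : ∀ ℓ, 0 < M ℓ) (phat : (Fin d → ℤ) → ℂ)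
    (hrec : ∀ k ∈ I, ∃ ℓ, uniqRec d I (z ℓ) (M ℓ) k) :
    ∀ k ∈ I, phat k =
      ((Lset d L I z M k).card : ℂ)⁻¹ *
        ∑ ℓ ∈ Lset d L I z M k, (1 / (M ℓ : ℂ)) *
          ∑ j ∈ Finset.range (M ℓ),
            (∑ k' ∈ I, phat k' *
              Complex.exp (2 * (Real.pi : ℂ) * Complex.I * (j : ℂ) *
                (∑ s, (k' s : ℂ) * ((z ℓ) s : ℂ)) / (M ℓ : ℂ))) *
            Complex.exp (-(2 * (Real.pi : ℂ) * Complex.I) * (j : ℂ) *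
              (∑ s, (k s : ℂ) * ((z ℓ) s : ℂ)) / (M ℓ : ℂ)) := by
  intro k hk
  classical
  obtain ⟨ℓ, hℓ⟩ := hrec k hk
  have hcard : ((Lset d L I z M k).card : ℂ) ≠ 0 :=
    Nat.cast_ne_zero.mpr (card_ne_zero_of_mem (mem_filter.mpr ⟨mem_univ ℓ, hℓ⟩))
  rw [sum_congr (s₁ := Lset d L I z M k) rfl fun ℓ hℓ =>
      (coeff_eq_rank1_lattice_quadrature I (z ℓ) (M ℓ) (hM ℓ).ne' phat hk
        (mem_filter.mp hℓ).2).symm,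
    sum_const, nsmul_eq_mul, inv_mul_cancel_left₀ hcard]
end
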